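/- If (a, b) ∈ B(q) × B(n-q) with a ≽ b^#, and R_1, R_2 are canonically ordered trees with weight sequences a and b respectively, then the ordered tree R obtained from R_2 by attaching R_1 as the new first subtree of the root of R_2 is canonically ordered, and ws(R) = n ⊕ a ⊕ b^#. -/

import Mathlib

inductive OTree : Type
  | node : List OTree → OTree

namespace OTree

def size : OTree → ℕ
  | .node cs => (cs.attach.map (fun c => size c.1)).sum + 1
decreasing_by simp only [OTree.node.sizeOf_spec]; have := List.sizeOf_lt_of_mem c.2; omega

def ws : OTree → List ℕ
  | .node cs => size (.node cs) :: (cs.attach.map (fun c => ws c.1)).flatten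
decreasing_by simp only [OTree.node.sizeOf_spec]; have := List.sizeOf_lt_of_mem c.2; omega

def preorder : OTree → List OTree
  | .node cs => .node cs :: (cs.attach.map (fun c => preorder c.1)).flatten
decreasing_by simp only [OTree.node.sizeOf_spec]; have := List.sizeOf_lt_of_mem c.2; omega

lemma size_pos (R : OTree) : 0 < R.size := by
  cases R with | node cs => simp only [OTree.size]; omega

end OTree

inductive RIso : OTree → OTree → Prop
  | node {cs cs' : List OTree} (l : List OTree) (hp : l.Perm cs')
      (hlen : cs.length = l.length)
      (h : ∀ (i : ℕ) (h1 : i < cs.length) (h2 : i < l.length), RIso cs[i] l[i]) :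
      RIso (.node cs) (.node cs')

inductive Canonical : OTree → Prop
  | node {cs : List OTree}
      (hchain : List.Chain' (fun u v => OTree.ws v ≤ OTree.ws u) cs)
      (h : ∀ c ∈ cs, Canonical c) : Canonical (.node cs)

def Centroidal {V : Type} [Fintype V] (G : SimpleGraph V) (u : V) : Prop :=
  ∀ v : ↥{x : V | x ≠ u},
    2 * Nat.card {w : ↥{x : V | x ≠ u} | (G.induce {x : V | x ≠ u}).Reachable v w}
      ≤ Fintype.card V

def IsParent (w : List ℕ) (i j : ℕ) : Prop :=
  i < j ∧ j < i + w.getD i 0 ∧ ∀ k, i < k → k < j → ¬ (j < k + w.getD k 0)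

def graphOf (R : OTree) : SimpleGraph (Fin R.size) :=
  SimpleGraph.fromRel (fun i j => IsParent R.ws i.1 j.1)

def rootIdx (R : OTree) : Fin R.size := ⟨0, R.size_pos⟩

def B (n : ℕ) : Set (List ℕ) := {s | ∃ R : OTree, Canonical R ∧ R.size = n ∧ R.ws = s}

def Succeq (s t : List ℕ) : Prop := t ≤ s ∨ s <+: t

def A (q n : ℕ) : Set (List ℕ × List ℕ) :=
  {p | p.1 ∈ B q ∧ p.2 ∈ B (n - q) ∧ Succeq p.1 p.2.tail}

def FwsUni {V : Type} [Fintype V] (G : SimpleGraph V) (s : List ℕ) : Prop :=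
  ∃ R : OTree, Canonical R ∧ R.ws = s ∧
    ∃ f : graphOf R ≃g G, Centroidal G (f (rootIdx R))

def FwsBi {V : Type} [Fintype V] (G : SimpleGraph V) (s : List ℕ) : Prop :=
  ∃ u v, u ≠ v ∧ G.Adj u v ∧ Centroidal G u ∧ Centroidal G v ∧
  ∃ A B : OTree, Canonical A ∧ Canonical B ∧ B.ws ≤ A.ws ∧ s = A.ws ++ B.ws ∧
  ∃ (fA : graphOf A ≃g (G.deleteEdges {s(u,v)}).induce
        {x | (G.deleteEdges {s(u,v)}).Reachable u x})
    (fB : graphOf B ≃g (G.deleteEdges {s(u,v)}).induce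
        {x | (G.deleteEdges {s(u,v)}).Reachable v x}),
    (fA (rootIdx A)).1 = u ∧ (fB (rootIdx B)).1 = v

/-! A weight sequence starts with its own length, so two weight sequences that are both prefixes
of the same list coincide. Hence, whether `a ≽ b^#` holds lexicographically or because `a` is a
prefix of `b^#`, the first subtree of `R_2`, whose weight sequence is a prefix of `b^#`, has weight
sequence at most `a`; this is the only new sibling comparison in `R`. -/

namespace List

theorem eq_of_isPrefix_of_head?_eq_length {s w t : List ℕ} (hs : s <+: t) (hw : w <+: t)
    (hs₀ : s.head? = some s.length) (hw₀ : w.head? = some w.length) : s = w := by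
  have head?_eq {u : List ℕ} (hu : u <+: t) (hu₀ : u.head? = some u.length) :
      t.head? = some u.length := by
    obtain ⟨v, rfl⟩ := hu
    rwa [head?_append_of_ne_nil _ (ne_nil_of_mem (mem_of_mem_head? hu₀))]
  have hlen : s.length = w.length := by
    simpa [head?_eq hs hs₀] using head?_eq hw hw₀
  exact (prefix_of_prefix_length_le hs hw hlen.le).eq_of_length hlen

theorem IsPrefix.linearOrder_le {α : Type*} [LinearOrder α] {w t : List α} (h : w <+: t) :
    w ≤ t := by
  obtain ⟨_ | ⟨x, u⟩, rfl⟩ := h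
  · rw [append_nil]
  · have : w ++ [] < w ++ x :: u := Lex.nil.append_left (· < ·) w
    simpa using this.le

end List

theorem Succeq.ge_of_isPrefix {a t w : List ℕ} (h : Succeq a t) (hw : w <+: t)
    (ha₀ : a.head? = some a.length) (hw₀ : w.head? = some w.length) : w ≤ a := by
  rcases h with hle | hpre
  · exact hw.linearOrder_le.trans hle
  · exact (List.eq_of_isPrefix_of_head?_eq_length hw hpre hw₀ ha₀).le

namespace OTree

theorem ws_node (cs : List OTree) :
    (node cs).ws = (node cs).size :: (cs.map ws).flatten := by
  rw [ws, List.attach_map_val (f := ws)]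

theorem size_node (cs : List OTree) : (node cs).size = (cs.map size).sum + 1 := by
  rw [size, List.attach_map_val (f := size)]

theorem length_ws (R : OTree) : R.ws.length = R.size := by
  induction R using ws.induct with
  | _ cs ih =>
    rw [ws_node, size_node, List.length_cons, List.length_flatten, List.map_map]
    congr 2
    exact List.map_congr_left fun c hc => ih ⟨c, hc⟩

theorem head?_ws (R : OTree) : R.ws.head? = some R.ws.length := by
  cases R
  rw [length_ws, ws_node, List.head?_cons]

theorem size_node_cons (R : OTree) (cs : List OTree) :
    (node (R :: cs)).size = R.size + (node cs).size := by
  simp only [size_node, List.map_cons, List.sum_cons]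
  omega

theorem ws_node_cons (R : OTree) (cs : List OTree) :
    (node (R :: cs)).ws = (node (R :: cs)).size :: (R.ws ++ (node cs).ws.tail) := by
  simp only [ws_node, List.map_cons, List.flatten_cons, List.tail_cons]

theorem ws_isPrefix_tail_ws_node {c : OTree} {cs : List OTree} (hc : c ∈ cs.head?) :
    c.ws <+: (node cs).ws.tail := by
  obtain ⟨cs', rfl⟩ := List.head?_eq_some_iff.mp hc
  simp only [ws_node, List.map_cons, List.flatten_cons, List.tail_cons]
  exact List.prefix_append _ _

end OTree

theorem Canonical.node_cons {R : OTree} {cs : List OTree} (hR : Canonical R)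
    (hcs : Canonical (.node cs)) (hhead : ∀ c ∈ cs.head?, c.ws ≤ R.ws) :
    Canonical (.node (R :: cs)) := by
  cases hcs with
  | node hchain hmem =>
    refine .node (List.isChain_cons.mpr ⟨hhead, hchain⟩) ?_
    rintro c (_ | ⟨_, hc⟩)
    exacts [hR, hmem c hc]

theorem length_of_mem_B {n : ℕ} {s : List ℕ} (hs : s ∈ B n) : s.length = n := by
  obtain ⟨R, -, rfl, rfl⟩ := hs
  exact R.length_ws

theorem stmt14_general (n q : ℕ) (a b : List ℕ)
    (ha : a ∈ B q) (hb : b ∈ B (n - q)) (hsucc : Succeq a b.tail)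
    (R1 : OTree) (cs : List OTree)
    (h1 : Canonical R1) (h2 : Canonical (OTree.node cs))
    (hwa : R1.ws = a) (hwb : (OTree.node cs).ws = b) :
    Canonical (OTree.node (R1 :: cs)) ∧
      (OTree.node (R1 :: cs)).ws = n :: (a ++ b.tail) := by
  subst hwa hwb
  have hsize : (OTree.node (R1 :: cs)).size = n := by
    have h₁ := length_of_mem_B ha
    have h₂ := length_of_mem_B hb
    -- `n - q` is a tree size, hence positive, so the subtraction does not truncate
    have h₂pos := (OTree.node cs).size_pos
    rw [OTree.length_ws] at h₁ h₂
    rw [OTree.size_node_cons]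
    omega
  refine ⟨h1.node_cons h2 fun c hc => ?_, hsize ▸ OTree.ws_node_cons R1 cs⟩
  exact hsucc.ge_of_isPrefix (OTree.ws_isPrefix_tail_ws_node hc) R1.head?_ws c.head?_ws

theorem stmt14 (n q : ℕ) (a b : List ℕ) (hq1 : 1 ≤ q) (hq : q ≤ n - 1)
    (ha : a ∈ B q) (hb : b ∈ B (n - q)) (hsucc : Succeq a b.tail)
    (R1 : OTree) (cs : List OTree)
    (h1 : Canonical R1) (h2 : Canonical (OTree.node cs))
    (hwa : R1.ws = a) (hwb : (OTree.node cs).ws = b) :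
    Canonical (OTree.node (R1 :: cs)) ∧
      (OTree.node (R1 :: cs)).ws = n :: (a ++ b.tail) :=
  stmt14_general n q a b ha hb hsucc R1 cs h1 h2 hwa hwb
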